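/- arXiv:2407.13114 — 4 statements merged into one kernel-verified Lean document; each statement's English description precedes it below -/
import Mathlib

section
/- There exists a constant K₁ > 0 and a threshold N₀ ∈ ℕ such that for all N ≥ N₀, the discrepancy of the Champernowne constant satisfies D(c, N) < K₁ / log N. -/
open scoped Classical

/-- The `i`-th decimal digit (for `i ≥ 1`) of a real number `α`, using the floor
convention, which for numbers admitting two decimal expansions selects the
expansion ending in a tail of `0`s. -/
noncomputable def digit (α : ℝ) (i : ℕ) : ℕ := (⌊α * 10 ^ i⌋ % 10).toNat

/-- Number of occurrences of the digit block `B` (of length `k`) as consecutive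
digits among the first `N` decimal digits of `α`:
`occ α B N = #{i : 1 ≤ i ≤ N - k + 1 ∧ (α_i, …, α_{i+k-1}) = B}`. -/
noncomputable def occ {k : ℕ} (α : ℝ) (B : Fin k → Fin 10) (N : ℕ) : ℕ :=
  ((Finset.Icc 1 N).filter fun i =>
    i + k ≤ N + 1 ∧ ∀ j : Fin k, digit α (i + (j : ℕ)) = (B j : ℕ)).card

/-- Discrepancy of the first `N` terms of a sequence `(x_n)_{n ≥ 1}` of points of `[0,1)`:
the supremum over `0 ≤ a < b < 1` of `|#{n ≤ N : x n ∈ [a,b)}/N - (b - a)|`. -/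
noncomputable def discSeq (x : ℕ → ℝ) (N : ℕ) : ℝ :=
  sSup {d : ℝ | ∃ a b : ℝ, 0 ≤ a ∧ a < b ∧ b < 1 ∧
    d = |(((Finset.Icc 1 N).filter fun n => x n ∈ Set.Ico a b).card : ℝ) / N - (b - a)|}

/-- Discrepancy of a real number for base 10: the discrepancy of the sequence
`(10^(n-1) α mod 1)_{n ≥ 1}`. -/
noncomputable def D (α : ℝ) (N : ℕ) : ℝ :=
  discSeq (fun n => Int.fract (10 ^ (n - 1) * α)) N

/-- `T v` is the total number of digits in the concatenation of the decimal
representations of `1, 2, …, v`. -/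
def T (v : ℕ) : ℕ := ∑ j ∈ Finset.Icc 1 v, (Nat.digits 10 j).length

/-- The Champernowne constant `c = 0.123456789101112…`, the concatenation of the
positive integers in base 10: the term `m` ends at decimal position `T m`. -/
noncomputable def champ : ℝ := ∑' m : ℕ, (m : ℝ) / 10 ^ T m

/-- `vOf N` is the least `v` with `T v ≥ N` (the term of the concatenation
containing the `N`-th digit). -/
noncomputable def vOf (N : ℕ) : ℕ := sInf {v | N ≤ T v}

/-- `nOf N` is the number of decimal digits of `vOf N`. -/
noncomputable def nOf (N : ℕ) : ℕ := (Nat.digits 10 (vOf N)).length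

/-- Number of non-overlapping occurrences of the block `B` (length `k`) in the string
`s_ℓ` (the concatenation of all `ℓ`-digit integers in increasing order): the number of
pairs `(y, j)` with `10^(ℓ-1) ≤ y < 10^ℓ`, `1 ≤ j ≤ ℓ - k + 1`, such that the digits of
`y` in positions `j, …, j + k - 1` (counted from the left) equal `B`. -/
def occNoSeg {k : ℕ} (B : Fin k → Fin 10) (ℓ : ℕ) : ℕ :=
  ((Finset.Ico (10 ^ (ℓ - 1)) (10 ^ ℓ) ×ˢ Finset.Icc 1 (ℓ - k + 1)).filter fun p =>
    ∀ i : Fin k, p.1 / 10 ^ (ℓ - (p.2 + (i : ℕ))) % 10 = (B i : ℕ)).card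

/-- Number of occurrences of the block `B` (length `k ≤ ℓ`) in the string `s_ℓ` that
straddle the boundary between two consecutive `ℓ`-digit terms `y` and `y + 1`:
the number of pairs `(y, j)` with `10^(ℓ-1) ≤ y < 10^ℓ - 1` and `1 ≤ j ≤ k - 1` such
that the last `j` digits of `y` are `(b₁, …, b_j)` and the first `k - j` digits of
`y + 1` are `(b_{j+1}, …, b_k)`. -/
def occOSeg {k : ℕ} (B : Fin k → Fin 10) (ℓ : ℕ) : ℕ :=
  ((Finset.Ico (10 ^ (ℓ - 1)) (10 ^ ℓ - 1) ×ˢ Finset.Ico 1 k).filter fun p =>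
    (∀ i : Fin k, (i : ℕ) < p.2 → p.1 / 10 ^ (p.2 - 1 - (i : ℕ)) % 10 = (B i : ℕ)) ∧
    (∀ i : Fin k, p.2 ≤ (i : ℕ) →
      (p.1 + 1) / 10 ^ (ℓ - 1 - ((i : ℕ) - p.2)) % 10 = (B i : ℕ))).card

/-!
The tail `t_v = 0.(v+1)(v+2)⋯` of `c` lies in `[0, 1)` and `10 ^ T v * c ≡ t_v (mod 1)`, so at
the `i`-th digit of `y = v + 1` the point `10 ^ (T v + i) * c mod 1` equals
`(y mod 10 ^ m + t_y) / 10 ^ m` with `m = dlen y - i`. Along a run of consecutive `ℓ`-digit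
integers `y` the residues `y mod 10 ^ m` are equidistributed, so such a run changes the counting
error `#{k < K : 10 ^ k c mod 1 ∈ [a, b)} - (b - a) K` by `O(10 ^ ℓ)`. Summing over `ℓ ≤ L`
gives an error `O(10 ^ L)` at `N ≍ L 10 ^ L`, that is `D(c, N) = O(1 / L) = O(1 / log N)`.
-/

def dlen (n : ℕ) : ℕ := (Nat.digits 10 n).length

lemma dlen_le_iff {n k : ℕ} : dlen n ≤ k ↔ n < 10 ^ k :=
  Nat.digits_length_le_iff (by norm_num) n

lemma lt_dlen_iff {n k : ℕ} : k < dlen n ↔ 10 ^ k ≤ n :=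
  Nat.lt_digits_length_iff (by norm_num) n

lemma lt_pow_dlen (n : ℕ) : n < 10 ^ dlen n := dlen_le_iff.mp le_rfl

lemma dlen_mono : Monotone dlen := fun _ _ h => Nat.le_length_digits_le 10 _ _ h

lemma dlen_eq_iff {n ℓ : ℕ} (hℓ : 1 ≤ ℓ) : dlen n = ℓ ↔ 10 ^ (ℓ - 1) ≤ n ∧ n < 10 ^ ℓ := by
  rw [← lt_dlen_iff, ← dlen_le_iff]
  omega

lemma dlen_pos {n : ℕ} (hn : 0 < n) : 0 < dlen n :=
  lt_dlen_iff.mpr (by simpa [Nat.one_le_iff_ne_zero] using hn.ne')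

lemma dlen_succ_eq_of_mem_Ico {ℓ A B y : ℕ} (hA : 10 ^ (ℓ - 1) ≤ A + 1) (hB : B < 10 ^ ℓ)
    (hy : y ∈ Finset.Ico A B) : dlen (y + 1) = ℓ := by
  rw [Finset.mem_Ico] at hy
  have hℓ : 1 ≤ ℓ := Nat.one_le_iff_ne_zero.mpr <| by rintro rfl; rw [pow_zero] at hB; omega
  exact (dlen_eq_iff hℓ).mpr ⟨by omega, by omega⟩

lemma T_eq_sum_range (v : ℕ) : T v = ∑ y ∈ Finset.range v, dlen (y + 1) := by
  rw [T, Finset.range_eq_Ico, Finset.sum_Ico_add' dlen, Finset.Ico_add_one_right_eq_Icc]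
  rfl

lemma T_zero : T 0 = 0 := rfl

lemma T_succ (v : ℕ) : T (v + 1) = T v + dlen (v + 1) := by
  simp only [T_eq_sum_range, Finset.sum_range_succ]

lemma T_mono : Monotone T :=
  monotone_nat_of_le_succ fun v => by rw [T_succ]; omega

lemma T_le_mul_dlen (v : ℕ) : T v ≤ v * dlen v := by
  rw [T_eq_sum_range]
  calc ∑ y ∈ Finset.range v, dlen (y + 1) ≤ ∑ _y ∈ Finset.range v, dlen v :=
        Finset.sum_le_sum fun y hy => dlen_mono (Finset.mem_range.mp hy)
    _ = v * dlen v := by simp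

lemma le_T (v : ℕ) : v ≤ T v := by
  induction v with
  | zero => exact le_rfl
  | succ v ih => have := dlen_pos (show 0 < v + 1 by omega); rw [T_succ]; omega

lemma exists_T_lt_le {N : ℕ} (hN : 0 < N) : ∃ V, T V < N ∧ N ≤ T (V + 1) := by
  have hex : ∃ v, N ≤ T v := ⟨N, le_T N⟩
  obtain ⟨V, hV⟩ : ∃ V, Nat.find hex = V + 1 :=
    Nat.exists_eq_succ_of_ne_zero fun h => by
      have := Nat.find_spec hex; rw [h, T_zero] at this; omega
  exact ⟨V, not_le.mp (Nat.find_min hex (by omega)), hV ▸ Nat.find_spec hex⟩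

lemma sum_Ico_T {M : Type*} [AddCommMonoid M] (g : ℕ → M) {A B : ℕ} (hAB : A ≤ B) :
    ∑ k ∈ Finset.Ico (T A) (T B), g k
      = ∑ y ∈ Finset.Ico A B, ∑ i ∈ Finset.range (dlen (y + 1)), g (T y + i) := by
  induction B, hAB using Nat.le_induction with
  | base => simp
  | succ B hAB ih =>
    rw [← Finset.sum_Ico_consecutive _ (T_mono hAB) (T_mono B.le_succ), ih,
      Finset.sum_Ico_succ_top hAB, Finset.sum_Ico_eq_sum_range g (T B), T_succ,
      Nat.add_sub_cancel_left]

lemma le_T_pow_sub_one (k : ℕ) : 9 * k * 10 ^ (k - 1) ≤ T (10 ^ k - 1) := by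
  rcases Nat.eq_zero_or_pos k with rfl | hk
  · simp
  have hpow : 10 ^ k = 10 * 10 ^ (k - 1) := by rw [← pow_succ']; congr 1; omega
  have hone : 1 ≤ 10 ^ (k - 1) := Nat.one_le_pow _ _ (by norm_num)
  have hlen : ∀ y ∈ Finset.Ico (10 ^ (k - 1) - 1) (10 ^ k - 1), dlen (y + 1) = k := by
    intro y hy
    rw [Finset.mem_Ico] at hy
    exact (dlen_eq_iff hk).mpr ⟨by omega, by omega⟩
  calc 9 * k * 10 ^ (k - 1)
        = ∑ y ∈ Finset.Ico (10 ^ (k - 1) - 1) (10 ^ k - 1), dlen (y + 1) := by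
        rw [Finset.sum_congr rfl hlen, Finset.sum_const, Nat.card_Ico, smul_eq_mul,
          show 10 ^ k - 1 - (10 ^ (k - 1) - 1) = 9 * 10 ^ (k - 1) by omega]
        ring
    _ ≤ T (10 ^ k - 1) := by
        rw [T_eq_sum_range]
        exact Finset.sum_le_sum_of_subset fun y hy => by
          simp only [Finset.mem_Ico, Finset.mem_range] at hy ⊢; omega

/-- The real number `0.(v+1)(v+2)(v+3)⋯`. -/
noncomputable def tail (v : ℕ) : ℝ :=
  ∑' i : ℕ, ((v + 1 + i : ℕ) : ℝ) * 10 ^ T v / 10 ^ T (v + 1 + i)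

lemma sum_range_tail_le (v n : ℕ) :
    ∑ i ∈ Finset.range n, ((v + 1 + i : ℕ) : ℝ) * 10 ^ T v / 10 ^ T (v + 1 + i)
      ≤ 1 - 10 ^ T v / 10 ^ T (v + n) := by
  induction n with
  | zero => simp
  | succ n ih =>
    set m := v + n + 1
    set x : ℝ := 10 ^ T v / 10 ^ T (v + n)
    set d : ℝ := 10 ^ dlen m with hd_def
    have hm : (m : ℝ) + 1 ≤ d := by rw [hd_def]; exact_mod_cast lt_pow_dlen m
    have hx : 0 ≤ x := by positivity
    have hd : 0 < d := by positivity
    have hnext : (10 : ℝ) ^ T v / 10 ^ T m = x / d := by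
      rw [T_succ, pow_add, div_div]
    rw [Finset.sum_range_succ, show v + 1 + n = m by omega, show v + (n + 1) = m by omega,
      mul_div_assoc, hnext]
    -- `m ≤ 10 ^ dlen m - 1` makes the partial sums telescope
    have : (m : ℝ) * (x / d) ≤ x - x / d := by
      rw [mul_div_assoc', le_sub_iff_add_le, ← add_div, div_le_iff₀ hd]
      nlinarith
    linarith

lemma tail_terms_nonneg (v i : ℕ) :
    0 ≤ ((v + 1 + i : ℕ) : ℝ) * 10 ^ T v / 10 ^ T (v + 1 + i) := by positivity

lemma summable_tail (v : ℕ) :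
    Summable fun i : ℕ => ((v + 1 + i : ℕ) : ℝ) * 10 ^ T v / 10 ^ T (v + 1 + i) :=
  summable_of_sum_range_le (tail_terms_nonneg v) fun n =>
    (sum_range_tail_le v n).trans (sub_le_self _ (by positivity))

lemma tail_nonneg (v : ℕ) : 0 ≤ tail v := tsum_nonneg (tail_terms_nonneg v)

lemma tail_le_one (v : ℕ) : tail v ≤ 1 :=
  Real.tsum_le_of_sum_range_le (tail_terms_nonneg v) fun n =>
    (sum_range_tail_le v n).trans (sub_le_self _ (by positivity))

lemma tail_eq (v : ℕ) : tail v = ((v + 1 : ℕ) + tail (v + 1)) / 10 ^ dlen (v + 1) := by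
  rw [tail, (summable_tail v).tsum_eq_zero_add, tail, add_div, ← tsum_div_const]
  congr 1
  · rw [add_zero, T_succ, pow_add]
    field_simp
  · congr 1
    funext i
    rw [show v + 1 + (i + 1) = v + 1 + 1 + i by omega, T_succ v, pow_add]
    field_simp

lemma tail_lt_one (v : ℕ) : tail v < 1 := by
  have hlt := lt_pow_dlen (v + 1)
  rw [tail_eq]
  generalize dlen (v + 1) = d at hlt ⊢
  rw [div_lt_one (by positivity)]
  rcases (Nat.succ_le_of_lt hlt).lt_or_eq with h | h
  · have : ((v + 1 : ℕ) : ℝ) + 2 ≤ 10 ^ d := by exact_mod_cast h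
    linarith [tail_le_one (v + 1)]
  · -- `v + 2 = 10 ^ d` has `d + 1` digits, which pushes the next tail below `1`
    have hd' : dlen (v + 1 + 1) = d + 1 :=
      (dlen_eq_iff (by omega)).mpr ⟨by rw [Nat.add_sub_cancel]; omega, by rw [pow_succ]; omega⟩
    have hnext : tail (v + 1) < 1 := by
      rw [tail_eq, hd', div_lt_one (by positivity), pow_succ]
      have : ((v + 1 + 1 : ℕ) : ℝ) = 10 ^ d := by exact_mod_cast h
      nlinarith [tail_le_one (v + 1 + 1), pow_le_pow_right₀ (show (1 : ℝ) ≤ 10 by norm_num)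
        (Nat.zero_le d)]
    have : ((v + 1 : ℕ) : ℝ) + 1 = 10 ^ d := by exact_mod_cast h
    linarith

lemma champ_eq_tail_zero : champ = tail 0 := by
  have hs : Summable fun m : ℕ => (m : ℝ) / 10 ^ T m := by
    refine (summable_nat_add_iff 1).mp ?_
    simpa [T_zero, add_comm] using summable_tail 0
  rw [champ, hs.tsum_eq_zero_add, tail]
  simp [T_zero, add_comm]

lemma exists_pow_T_mul_champ (v : ℕ) : ∃ z : ℕ, 10 ^ T v * champ = z + tail v := by
  induction v with
  | zero => exact ⟨0, by simp [T_zero, champ_eq_tail_zero]⟩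
  | succ v ih =>
    obtain ⟨z, hz⟩ := ih
    refine ⟨10 ^ dlen (v + 1) * z + (v + 1), ?_⟩
    rw [T_succ, pow_add, mul_comm ((10 : ℝ) ^ T v), mul_assoc, hz, tail_eq v]
    field_simp
    push_cast
    ring

lemma fract_natCast_add_div {y M : ℕ} (hM : 0 < M) {t : ℝ} (ht₀ : 0 ≤ t) (ht₁ : t < 1) :
    Int.fract (((y : ℝ) + t) / M) = (((y % M : ℕ) : ℝ) + t) / M := by
  have hM' : (0 : ℝ) < M := by exact_mod_cast hM
  have hmod : ((y % M : ℕ) : ℝ) + 1 ≤ M := by exact_mod_cast Nat.mod_lt y hM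
  rw [Int.fract_eq_iff]
  refine ⟨by positivity, by rw [div_lt_one hM']; linarith, ((y / M : ℕ) : ℤ), ?_⟩
  have hdiv : (M : ℝ) * ((y / M : ℕ) : ℝ) + ((y % M : ℕ) : ℝ) = y := by
    exact_mod_cast Nat.div_add_mod y M
  rw [Int.cast_natCast]
  field_simp
  linarith

noncomputable def champFract (k : ℕ) : ℝ := Int.fract (10 ^ k * champ)

lemma champFract_T_add {v i : ℕ} (hi : i < dlen (v + 1)) :
    champFract (T v + i)
      = ((((v + 1) % 10 ^ (dlen (v + 1) - i) : ℕ) : ℝ) + tail (v + 1))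
        / 10 ^ (dlen (v + 1) - i) := by
  obtain ⟨z, hz⟩ := exists_pow_T_mul_champ v
  have hsplit : (10 : ℝ) ^ (T v + i) * champ
      = ((10 ^ i * z : ℕ) : ℝ)
        + (((v + 1 : ℕ) : ℝ) + tail (v + 1)) / ((10 ^ (dlen (v + 1) - i) : ℕ) : ℝ) := by
    rw [pow_add, mul_comm ((10 : ℝ) ^ T v), mul_assoc, hz, tail_eq]
    have : (10 : ℝ) ^ dlen (v + 1) = 10 ^ i * 10 ^ (dlen (v + 1) - i) := by
      rw [← pow_add]; congr 1; omega
    rw [this]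
    push_cast
    field_simp
  rw [champFract, hsplit, Int.fract_natCast_add,
    fract_natCast_add_div (by positivity) (tail_nonneg _) (tail_lt_one _)]
  push_cast
  rfl

section Counting

variable {p : ℕ → Prop} [DecidablePred p] {M : ℕ}

lemma card_filter_Ico_mul_of_periodic (hp : Function.Periodic p M) (n q : ℕ) :
    ((Finset.Ico n (n + q * M)).filter p).card = q * M.count p := by
  induction q with
  | zero => simp
  | succ q ih =>
    rw [Finset.card_filter] at ih ⊢
    rw [← Finset.sum_Ico_consecutive _ (m := n) (n := n + q * M) (by omega) (by nlinarith), ih,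
      show n + (q + 1) * M = n + q * M + M by ring, ← Finset.card_filter,
      Nat.filter_Ico_card_eq_of_periodic _ _ _ hp]
    ring

lemma abs_card_filter_Ico_sub_le_of_periodic (hp : Function.Periodic p M) (hM : 0 < M)
    (n R : ℕ) :
    |(((Finset.Ico n (n + R)).filter p).card : ℝ) - R * M.count p / M| ≤ M.count p := by
  obtain ⟨q, r, hr, rfl⟩ : ∃ q r, r < M ∧ R = q * M + r :=
    ⟨R / M, R % M, Nat.mod_lt R hM, (Nat.div_add_mod' R M).symm⟩
  have hsplit : ((Finset.Ico n (n + (q * M + r))).filter p).card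
      = q * M.count p + ((Finset.Ico (n + q * M) (n + q * M + r)).filter p).card := by
    rw [Finset.card_filter, Finset.card_filter, ← add_assoc,
      ← Finset.sum_Ico_consecutive _ (m := n) (n := n + q * M) (by omega) (by omega),
      ← Finset.card_filter, card_filter_Ico_mul_of_periodic hp]
  have hrest : (((Finset.Ico (n + q * M) (n + q * M + r)).filter p).card : ℝ) ≤ M.count p := by
    rw [← Nat.filter_Ico_card_eq_of_periodic (n + q * M) M p hp]
    exact_mod_cast Finset.card_le_card (Finset.filter_subset_filter _
      (Finset.Ico_subset_Ico_right (by omega)))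
  have hM' : (0 : ℝ) < M := by exact_mod_cast hM
  have hrc : (r : ℝ) * M.count p / M ≤ M.count p := by
    rw [div_le_iff₀ hM', mul_comm]
    exact mul_le_mul_of_nonneg_left (by exact_mod_cast hr.le) (by positivity)
  have hR : ((q * M + r : ℕ) : ℝ) * M.count p / M = q * M.count p + r * M.count p / M := by
    push_cast
    field_simp
  rw [hsplit, hR, abs_le]
  push_cast
  constructor <;> linarith [(by positivity : (0 : ℝ) ≤ r * M.count p / M)]

end Counting

lemma count_mod_mem_Ico {M u v : ℕ} (hv : v ≤ M) :
    M.count (fun y => y % M ∈ Finset.Ico u v) = v - u := by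
  rw [Nat.count_eq_card_filter_range, ← Nat.card_Ico u v]
  congr 1
  ext y
  simp only [Finset.mem_filter, Finset.mem_range, Finset.mem_Ico]
  constructor
  · rintro ⟨hy, h⟩; rwa [Nat.mod_eq_of_lt hy] at h
  · rintro h; exact ⟨by omega, by rwa [Nat.mod_eq_of_lt (by omega)]⟩

lemma abs_card_filter_mod_mem_Ico_sub_le {M u v : ℕ} (hM : 0 < M) (hv : v ≤ M) (n R : ℕ) :
    |(((Finset.Ico n (n + R)).filter fun y => y % M ∈ Finset.Ico u v).card : ℝ)
      - R * (v - u : ℕ) / M| ≤ (v - u : ℕ) := by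
  have hp : Function.Periodic (fun y => y % M ∈ Finset.Ico u v) M := fun y => by simp
  have h := abs_card_filter_Ico_sub_le_of_periodic hp hM n R
  rwa [count_mod_mem_Ico hv] at h

section Squeeze

variable {a b t : ℝ} {M r : ℕ}

lemma add_div_mem_Ico_of_mem_Ico_ceil_floor (hb : 0 ≤ b * M) (hM : 0 < M) (ht₀ : 0 ≤ t)
    (ht₁ : t < 1) (hr : r ∈ Finset.Ico ⌈a * M⌉₊ ⌊b * M⌋₊) : ((r : ℝ) + t) / M ∈ Set.Ico a b := by
  rw [Finset.mem_Ico, Nat.ceil_le, Nat.lt_iff_add_one_le, Nat.le_floor_iff hb] at hr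
  push_cast at hr
  rw [Set.mem_Ico, le_div_iff₀ (by exact_mod_cast hM), div_lt_iff₀ (by exact_mod_cast hM)]
  constructor <;> linarith

lemma mem_Ico_floor_ceil_of_add_div_mem (ha : 0 ≤ a * M) (hM : 0 < M) (ht₀ : 0 ≤ t)
    (ht₁ : t < 1) (hr : ((r : ℝ) + t) / M ∈ Set.Ico a b) : r ∈ Finset.Ico ⌊a * M⌋₊ ⌈b * M⌉₊ := by
  rw [Set.mem_Ico, le_div_iff₀ (by exact_mod_cast hM), div_lt_iff₀ (by exact_mod_cast hM)] at hr
  rw [Finset.mem_Ico, ← Nat.lt_add_one_iff, Nat.floor_lt ha, Nat.lt_ceil]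
  push_cast
  constructor <;> linarith

end Squeeze

lemma abs_card_filter_mod_add_div_mem_sub_le {a b : ℝ} (ha : 0 ≤ a) (hab : a ≤ b) (hb : b ≤ 1)
    {M : ℕ} (hM : 0 < M) {t : ℕ → ℝ} (ht₀ : ∀ y, 0 ≤ t y) (ht₁ : ∀ y, t y < 1) (n R : ℕ) :
    |(((Finset.Ico n (n + R)).filter fun y =>
        (((y % M : ℕ) : ℝ) + t y) / M ∈ Set.Ico a b).card : ℝ) - (b - a) * R|
      ≤ 2 * R / M + M := by
  have haM : 0 ≤ a * M := by positivity
  have hbM₀ : 0 ≤ b * M := by nlinarith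
  have hbM : b * M ≤ M := by nlinarith
  -- as `0 ≤ t y < 1`, the condition holds for `y % M ∈ [⌈aM⌉, ⌊bM⌋)` and implies
  -- `y % M ∈ [⌊aM⌋, ⌈bM⌉)`: squeeze between two residue-class counts
  set u₁ := ⌈a * M⌉₊
  set v₁ := ⌊b * M⌋₊
  set u₂ := ⌊a * M⌋₊
  set v₂ := ⌈b * M⌉₊
  have hv₁ : v₁ ≤ M := Nat.floor_le_of_le hbM
  have hv₂ : v₂ ≤ M := Nat.ceil_le.mpr hbM
  have hsub₁ : (Finset.Ico n (n + R)).filter (fun y => y % M ∈ Finset.Ico u₁ v₁)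
      ⊆ (Finset.Ico n (n + R)).filter fun y => (((y % M : ℕ) : ℝ) + t y) / M ∈ Set.Ico a b :=
    Finset.monotone_filter_right _ fun y _ =>
      add_div_mem_Ico_of_mem_Ico_ceil_floor hbM₀ hM (ht₀ y) (ht₁ y)
  have hsub₂ : (Finset.Ico n (n + R)).filter
        (fun y => (((y % M : ℕ) : ℝ) + t y) / M ∈ Set.Ico a b)
      ⊆ (Finset.Ico n (n + R)).filter fun y => y % M ∈ Finset.Ico u₂ v₂ :=
    Finset.monotone_filter_right _ fun y _ =>
      mem_Ico_floor_ceil_of_add_div_mem haM hM (ht₀ y) (ht₁ y)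
  have hw₁ : (b - a) * M - 2 ≤ ((v₁ - u₁ : ℕ) : ℝ) := by
    have h : ((v₁ : ℕ) : ℝ) ≤ ((v₁ - u₁ : ℕ) : ℝ) + u₁ := by exact_mod_cast le_tsub_add
    linarith [Nat.lt_floor_add_one (b * M), Nat.ceil_lt_add_one haM]
  have hw₂ : ((v₂ - u₂ : ℕ) : ℝ) ≤ (b - a) * M + 2 := by
    have hle : u₂ ≤ v₂ := by
      exact_mod_cast (Nat.floor_le haM).trans
        ((by nlinarith : a * M ≤ b * M).trans (Nat.le_ceil _))
    rw [Nat.cast_sub hle]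
    linarith [Nat.lt_floor_add_one (a * M), Nat.ceil_lt_add_one hbM₀]
  have hw₂M : ((v₂ - u₂ : ℕ) : ℝ) ≤ M := by exact_mod_cast (Nat.sub_le _ _).trans hv₂
  have hc₁ := abs_le.mp (abs_card_filter_mod_mem_Ico_sub_le (u := u₁) hM hv₁ n R)
  have hc₂ := abs_le.mp (abs_card_filter_mod_mem_Ico_sub_le (u := u₂) hM hv₂ n R)
  have hle₁ := (Nat.cast_le (α := ℝ)).mpr (Finset.card_le_card hsub₁)
  have hle₂ := (Nat.cast_le (α := ℝ)).mpr (Finset.card_le_card hsub₂)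
  set x : ℝ := R / M with hx
  have hx₀ : 0 ≤ x := by positivity
  have hRM : ∀ w : ℝ, R * w / M = x * w := fun w => by rw [hx]; ring
  have hba : (b - a) * R = x * ((b - a) * M) := by rw [hx]; field_simp
  rw [hRM] at hc₁ hc₂
  rw [hba, show 2 * (R : ℝ) / M = 2 * x by rw [hx]; ring, abs_le]
  have := mul_le_mul_of_nonneg_left hw₁ hx₀
  have := mul_le_mul_of_nonneg_left hw₂ hx₀
  constructor <;> nlinarith

noncomputable def localDisc (x : ℕ → ℝ) (a b : ℝ) (K : ℕ) : ℝ :=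
  ∑ k ∈ Finset.range K, ((if x k ∈ Set.Ico a b then 1 else 0) - (b - a))

lemma abs_localDisc_sub_le (x : ℕ → ℝ) {a b : ℝ} (hab : a ≤ b) (hb : b - a ≤ 1) {K K' : ℕ}
    (hK : K ≤ K') : |localDisc x a b K' - localDisc x a b K| ≤ K' - K := by
  rw [localDisc, localDisc, ← Finset.sum_Ico_eq_sub (δ := ℝ) _ hK, ← Nat.cast_sub hK,
    ← Nat.card_Ico]
  refine (Finset.abs_sum_le_sum_abs _ _).trans ?_
  calc _ ≤ ∑ _k ∈ Finset.Ico K K', (1 : ℝ) := Finset.sum_le_sum fun k _ => by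
        rw [abs_le]; split_ifs <;> constructor <;> linarith
    _ = _ := by simp

lemma abs_sum_Ico_champFract_sub_le {a b : ℝ} (ha : 0 ≤ a) (hab : a ≤ b) (hb : b ≤ 1)
    {ℓ A B i : ℕ} (hA : 10 ^ (ℓ - 1) ≤ A + 1) (hAB : A ≤ B) (hB : B < 10 ^ ℓ) (hi : i < ℓ) :
    |∑ y ∈ Finset.Ico A B, ((if champFract (T y + i) ∈ Set.Ico a b then 1 else 0) - (b - a))|
      ≤ 2 * 10 ^ i + 10 ^ (ℓ - i) := by
  have hlen : ∀ y ∈ Finset.Ico A B, dlen (y + 1) = ℓ := fun y hy =>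
    dlen_succ_eq_of_mem_Ico hA hB hy
  have hcount : ∑ y ∈ Finset.Ico A B, ((if champFract (T y + i) ∈ Set.Ico a b then 1 else 0)
        - (b - a))
      = (((Finset.Ico (A + 1) (A + 1 + (B - A))).filter fun y =>
          (((y % 10 ^ (ℓ - i) : ℕ) : ℝ) + tail y) / ((10 ^ (ℓ - i) : ℕ) : ℝ)
            ∈ Set.Ico a b).card : ℝ) - (b - a) * (B - A : ℕ) := by
    rw [Finset.sum_sub_distrib, Finset.natCast_card_filter, Finset.sum_const, Nat.card_Ico,
      nsmul_eq_mul, mul_comm, show A + 1 + (B - A) = B + 1 by omega, ← Finset.sum_Ico_add']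
    congr 1
    refine Finset.sum_congr rfl fun y hy => ?_
    rw [champFract_T_add (by rw [hlen y hy]; exact hi), hlen y hy]
    push_cast
    rfl
  have hR : 2 * ((B - A : ℕ) : ℝ) / 10 ^ (ℓ - i) ≤ 2 * 10 ^ i := by
    rw [div_le_iff₀ (by positivity), mul_assoc, ← pow_add, show i + (ℓ - i) = ℓ by omega]
    have : ((B - A : ℕ) : ℝ) ≤ 10 ^ ℓ := by exact_mod_cast (Nat.sub_le B A).trans hB.le
    linarith
  rw [hcount]
  refine (abs_card_filter_mod_add_div_mem_sub_le ha hab hb (by positivity) tail_nonneg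
    tail_lt_one _ _).trans ?_
  push_cast
  linarith

lemma sum_range_pow_ten_le (ℓ : ℕ) : ∑ i ∈ Finset.range ℓ, (10 : ℝ) ^ i ≤ 10 ^ ℓ := by
  exact_mod_cast (Nat.geomSum_lt (by norm_num : 2 ≤ 10) fun k hk => Finset.mem_range.mp hk).le

section Blocks

variable {a b : ℝ}

lemma abs_localDisc_T_sub_le (ha : 0 ≤ a) (hab : a ≤ b) (hb : b ≤ 1) {ℓ A B : ℕ}
    (hA : 10 ^ (ℓ - 1) ≤ A + 1) (hAB : A ≤ B) (hB : B < 10 ^ ℓ) :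
    |localDisc champFract a b (T B) - localDisc champFract a b (T A)| ≤ 12 * 10 ^ ℓ := by
  have hlen : ∀ y ∈ Finset.Ico A B, dlen (y + 1) = ℓ := fun y hy =>
    dlen_succ_eq_of_mem_Ico hA hB hy
  rw [localDisc, localDisc, ← Finset.sum_Ico_eq_sub (δ := ℝ) _ (T_mono hAB), sum_Ico_T _ hAB,
    Finset.sum_congr rfl fun y hy => by rw [hlen y hy], Finset.sum_comm]
  have hreflect :
      ∑ i ∈ Finset.range ℓ, (10 : ℝ) ^ (ℓ - i) = 10 * ∑ i ∈ Finset.range ℓ, 10 ^ i := by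
    rw [← Finset.sum_range_reflect, Finset.mul_sum]
    refine Finset.sum_congr rfl fun i hi => ?_
    rw [← pow_succ']
    congr 1
    have := Finset.mem_range.mp hi
    omega
  calc _ ≤ ∑ i ∈ Finset.range ℓ, |∑ y ∈ Finset.Ico A B,
          ((if champFract (T y + i) ∈ Set.Ico a b then 1 else 0) - (b - a))| :=
        Finset.abs_sum_le_sum_abs _ _
    _ ≤ ∑ i ∈ Finset.range ℓ, (2 * (10 : ℝ) ^ i + 10 ^ (ℓ - i)) :=
        Finset.sum_le_sum fun i hi => abs_sum_Ico_champFract_sub_le ha hab hb hA hAB hB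
          (Finset.mem_range.mp hi)
    _ ≤ 12 * 10 ^ ℓ := by
        rw [Finset.sum_add_distrib, ← Finset.mul_sum, hreflect]
        linarith [sum_range_pow_ten_le ℓ]

lemma abs_localDisc_T_le (ha : 0 ≤ a) (hab : a ≤ b) (hb : b ≤ 1) (ℓ : ℕ) {V : ℕ}
    (hV : V < 10 ^ ℓ) :
    |localDisc champFract a b (T V)| ≤ 14 * 10 ^ ℓ := by
  induction ℓ generalizing V with
  | zero =>
    obtain rfl : V = 0 := by simpa using hV
    simp [localDisc, T_zero]
  | succ ℓ ih =>
    have hpow : (10 : ℝ) ^ (ℓ + 1) = 10 * 10 ^ ℓ := pow_succ' _ _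
    by_cases hVℓ : V < 10 ^ ℓ
    · linarith [ih hVℓ, (by positivity : (0 : ℝ) ≤ 10 ^ ℓ)]
    · have hone : 1 ≤ 10 ^ ℓ := Nat.one_le_pow _ _ (by norm_num)
      have hprev := ih (V := 10 ^ ℓ - 1) (by omega)
      have hblock := abs_localDisc_T_sub_le ha hab hb (ℓ := ℓ + 1) (A := 10 ^ ℓ - 1)
        (by simp; omega) (by omega) hV
      have := abs_sub_abs_le_abs_sub (localDisc champFract a b (T V))
        (localDisc champFract a b (T (10 ^ ℓ - 1)))
      linarith [(by positivity : (0 : ℝ) ≤ 10 ^ ℓ)]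

lemma abs_localDisc_le (ha : 0 ≤ a) (hab : a ≤ b) (hb : b ≤ 1) {N V : ℕ} (hV : T V < N)
    (hN : N ≤ T (V + 1)) :
    |localDisc champFract a b N| ≤ 15 * 10 ^ dlen (V + 1) := by
  have hblocks := abs_localDisc_T_le ha hab hb (dlen (V + 1)) (V := V)
    ((Nat.lt_succ_self V).trans (lt_pow_dlen (V + 1)))
  have hlast := abs_localDisc_sub_le champFract hab (by linarith) hV.le
  have hlen : ((N - T V : ℕ) : ℝ) ≤ 10 ^ dlen (V + 1) := by
    rw [T_succ] at hN
    exact_mod_cast ((show N - T V ≤ dlen (V + 1) by omega).trans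
      (Nat.lt_pow_self (by norm_num)).le)
  have := abs_sub_abs_le_abs_sub (localDisc champFract a b N) (localDisc champFract a b (T V))
  push_cast [hV.le] at hlen
  linarith

end Blocks

lemma discSeq_le_of_abs_localDisc_le {x : ℕ → ℝ} {N : ℕ} (hN : 0 < N) {B : ℝ}
    (h : ∀ a b : ℝ, 0 ≤ a → a < b → b < 1 → |localDisc (fun k => x (k + 1)) a b N| ≤ B) :
    discSeq x N ≤ B / N := by
  have hB : 0 ≤ B := (abs_nonneg _).trans (h 0 (1 / 2) le_rfl (by norm_num) (by norm_num))
  have hN' : (0 : ℝ) < N := by exact_mod_cast hN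
  refine Real.sSup_le ?_ (by positivity)
  rintro d ⟨a, b, ha, hab, hb, rfl⟩
  have hcard : (((Finset.Icc 1 N).filter fun n => x n ∈ Set.Ico a b).card : ℝ)
      = localDisc (fun k => x (k + 1)) a b N + (b - a) * N := by
    rw [localDisc, Finset.sum_sub_distrib, Finset.sum_const, Finset.card_range, nsmul_eq_mul,
      Finset.natCast_card_filter, Finset.range_eq_Ico, Finset.sum_Ico_add' (fun n =>
        if x n ∈ Set.Ico a b then (1 : ℝ) else 0), Finset.Ico_add_one_right_eq_Icc]
    ring
  rw [hcard, add_div, mul_div_assoc, div_self hN'.ne', mul_one, add_sub_cancel_right, abs_div,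
    abs_of_pos hN']
  exact div_le_div_of_nonneg_right (h a b ha hab hb) hN'.le

lemma D_champ_le {N V : ℕ} (hV : T V < N) (hN : N ≤ T (V + 1)) :
    D champ N ≤ 15 * 10 ^ dlen (V + 1) / N :=
  discSeq_le_of_abs_localDisc_le (by omega) fun _ _ ha hab hb =>
    abs_localDisc_le ha hab.le hb.le hV hN

lemma pow_div_lt_div_log {N L : ℕ} (hL : 2 ≤ L) (hlow : 9 * (L - 1) * 10 ^ (L - 2) < N)
    (hup : N ≤ L * 10 ^ L) : 15 * (10 : ℝ) ^ L / N < 10 ^ 4 / Real.log N := by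
  have hN : (10 : ℝ) ≤ N := by
    have : 9 ≤ 9 * (L - 1) * 10 ^ (L - 2) :=
      Nat.le_mul_of_pos_right _ (Nat.one_le_pow _ _ (by norm_num)) |>.trans' (by omega)
    exact_mod_cast (show 10 ≤ N by omega)
  have hlog : 0 < Real.log N := Real.log_pos (by linarith)
  have hlogN : Real.log N ≤ 18 * L := by
    have hN2 : (N : ℝ) ≤ 10 ^ (2 * L) := by
      rw [pow_mul', sq]
      exact_mod_cast hup.trans (Nat.mul_le_mul_right _ (Nat.lt_pow_self (by norm_num)).le)
    have := Real.log_le_log (by linarith) hN2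
    rw [Real.log_pow] at this
    push_cast at this
    nlinarith [Real.log_le_sub_one_of_pos (by norm_num : (0 : ℝ) < 10)]
  have hpow : (10 : ℝ) ^ L = 100 * 10 ^ (L - 2) := by
    rw [show L = L - 2 + 2 by omega, pow_add, Nat.add_sub_cancel]; ring
  have hlow' : 9 * ((L : ℝ) - 1) * 10 ^ (L - 2) < N := by
    have : ((L - 1 : ℕ) : ℝ) = L - 1 := by rw [Nat.cast_sub (by omega)]; simp
    rw [← this]; exact_mod_cast hlow
  have hL' : (2 : ℝ) ≤ L := by exact_mod_cast hL
  rw [div_lt_div_iff₀ (by linarith) hlog, hpow]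
  have hP : (0 : ℝ) < 10 ^ (L - 2) := by positivity
  nlinarith [mul_le_mul_of_nonneg_left hlogN (by positivity : (0 : ℝ) ≤ 1500 * 10 ^ (L - 2)),
    mul_pos hP (by linarith : (0 : ℝ) < L)]

/-- There exist `K₁ > 0` and `N₀` such that for all `N ≥ N₀`,
`D(c, N) < K₁ / log N` for the Champernowne constant `c`. -/
theorem champernowne_discrepancy_upper :
    ∃ K₁ : ℝ, 0 < K₁ ∧ ∃ N₀ : ℕ, ∀ N : ℕ, N₀ ≤ N → D champ N < K₁ / Real.log N := by
  refine ⟨10 ^ 4, by norm_num, 10, fun N hN => ?_⟩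
  obtain ⟨V, hV, hVN⟩ := exists_T_lt_le (by omega : 0 < N)
  set L := dlen (V + 1)
  have hVL : V + 1 < 10 ^ L := lt_pow_dlen (V + 1)
  have hNV : N ≤ (V + 1) * L := hVN.trans (T_le_mul_dlen (V + 1))
  have hL : 2 ≤ L := by
    by_contra! h
    have : (V + 1) * L ≤ V + 1 := by simpa using Nat.mul_le_mul_left (V + 1) (by omega : L ≤ 1)
    have : 10 ^ L ≤ 10 := Nat.pow_le_pow_right (by norm_num) (by omega) |>.trans_eq (pow_one 10)
    omega
  have hup : N ≤ L * 10 ^ L := hNV.trans (by rw [mul_comm]; exact Nat.mul_le_mul_left L hVL.le)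
  have hlow : 9 * (L - 1) * 10 ^ (L - 2) < N := by
    have hV' : 10 ^ (L - 1) - 1 ≤ V := by have := lt_dlen_iff.mp (show L - 1 < L by omega); omega
    exact (le_T_pow_sub_one (L - 1)).trans (T_mono hV') |>.trans_lt hV
  calc D champ N ≤ 15 * 10 ^ L / N := D_champ_le hV hVN
    _ < 10 ^ 4 / Real.log N := pow_div_lt_div_log hL hlow hup
end

section
/- Let α ∈ [0,1), let B₁ and B₂ be digit blocks of equal length k ≥ 1, and let C > 0. If |occ(α, B₁, N) − occ(α, B₂, N)| > C·N/log N holds for infinitely many N ∈ ℕ, then D(α, N) > (C/3)/log N holds for infinitely many N ∈ ℕ. -/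
open scoped Classical

/-! The first `k` digits of `10^(n-1) α mod 1` spell the block `B` exactly when this point lies
in the decimal interval `[v / 10^k, (v + 1) / 10^k)`, where `v` is `B` read as an integer. So
`occ(α, B, N)` counts how many of the first `M = N + 1 - k` points fall into an interval of length
`10^(-k)`, and differs from `M / 10^k` by at most `M · D(α, M)`. For two blocks this gives
`C N / log N < |occ(α, B₁, N) - occ(α, B₂, N)| ≤ 2 M · D(α, M)`, and since `M ≤ N ≤ 2M` forces
`N² ≤ M³` once `N ≥ 8`, we get `D(α, M) > C / (2 log N) ≥ C / (3 log M)`. -/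

theorem Nat.mod_pow_eq_mod_pow_of_div_pow_mod_eq {b f g k : ℕ}
    (h : ∀ s < k, f / b ^ s % b = g / b ^ s % b) : f % b ^ k = g % b ^ k := by
  induction k with
  | zero => simp [Nat.mod_one]
  | succ k ih =>
    rw [Nat.mod_pow_succ, Nat.mod_pow_succ, ih fun s hs => h s (by omega), h k (by omega)]

theorem Nat.eq_iff_forall_div_pow_mod_eq {b f g k : ℕ} (hf : f < b ^ k) (hg : g < b ^ k) :
    f = g ↔ ∀ s < k, f / b ^ s % b = g / b ^ s % b := by
  refine ⟨fun h _ _ => h ▸ rfl, fun h => ?_⟩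
  simpa [Nat.mod_eq_of_lt hf, Nat.mod_eq_of_lt hg] using
    Nat.mod_pow_eq_mod_pow_of_div_pow_mod_eq h

theorem Nat.ofDigits_div_pow_mod {b : ℕ} {L : List ℕ} (hL : ∀ d ∈ L, d < b) {s : ℕ}
    (hs : s < L.length) : Nat.ofDigits b L / b ^ s % b = L[s] := by
  have hb : 0 < b := (Nat.zero_le _).trans_lt (hL _ (List.getElem_mem hs))
  rw [Nat.ofDigits_div_pow_eq_ofDigits_drop s hb L hL, Nat.ofDigits_mod_eq_head!,
    List.drop_eq_getElem_cons hs, List.head!_cons, Nat.mod_eq_of_lt (hL _ (List.getElem_mem hs))]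

theorem Nat.floor_mul_eq_iff_mem_Ico {x c : ℝ} (hx : 0 ≤ x) (hc : 0 < c) (v : ℕ) :
    ⌊x * c⌋₊ = v ↔ x ∈ Set.Ico (v / c) ((v + 1) / c) := by
  rw [Nat.floor_eq_iff (by positivity), Set.mem_Ico, div_le_iff₀ hc, lt_div_iff₀ hc]

theorem floor_mul_pow_eq_div {x : ℝ} {n k : ℕ} (hnk : n ≤ k) :
    ⌊x * 10 ^ n⌋₊ = ⌊x * 10 ^ k⌋₊ / 10 ^ (k - n) := by
  rw [← Nat.floor_div_natCast]
  congr 1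
  rw [show (10 : ℝ) ^ k = 10 ^ n * 10 ^ (k - n) by rw [← pow_add, Nat.add_sub_cancel' hnk]]
  push_cast
  field_simp

theorem digit_pow_mul (α : ℝ) (m n : ℕ) : digit (10 ^ m * α) n = digit α (m + n) := by
  rw [digit, digit, pow_add, mul_comm ((10 : ℝ) ^ m), mul_assoc]

theorem digit_fract (y : ℝ) {n : ℕ} (hn : 1 ≤ n) : digit (Int.fract y) n = digit y n := by
  have hfloor : ⌊Int.fract y * 10 ^ n⌋ = ⌊y * 10 ^ n⌋ - ⌊y⌋ * 10 ^ (n - 1) * 10 := by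
    rw [← Int.floor_sub_intCast]
    congr 1
    push_cast
    rw [mul_assoc, ← pow_succ, Nat.sub_add_cancel hn, Int.fract]
    ring
  rw [digit, digit, hfloor, Int.sub_mul_emod_self_right]

theorem digit_eq_floor_mod {x : ℝ} (hx : 0 ≤ x) (n : ℕ) : digit x n = ⌊x * 10 ^ n⌋₊ % 10 := by
  rw [digit, ← Int.natCast_floor_eq_floor (by positivity)]
  omega

section Discrepancy

variable (x : ℕ → ℝ) (N : ℕ)

noncomputable def countIco (a b : ℝ) : ℕ :=
  ((Finset.Icc 1 N).filter fun n => x n ∈ Set.Ico a b).card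

theorem countIco_le (a b : ℝ) : countIco x N a b ≤ N :=
  (Finset.card_filter_le _ _).trans (Nat.card_Icc 1 N).le

theorem countIco_self (a : ℝ) : countIco x N a a = 0 := by
  simp [countIco]

theorem abs_countIco_div_sub_le_discSeq {a b : ℝ} (ha : 0 ≤ a) (hab : a < b) (hb : b < 1) :
    |(countIco x N a b : ℝ) / N - (b - a)| ≤ discSeq x N := by
  refine le_csSup ⟨1, ?_⟩ ⟨a, b, ha, hab, hb, rfl⟩
  rintro d ⟨a', b', ha', hab', hb', rfl⟩
  change |(countIco x N a' b' : ℝ) / N - (b' - a')| ≤ 1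
  have hfreq : (countIco x N a' b' : ℝ) / N ≤ 1 :=
    div_le_one_of_le₀ (by exact_mod_cast countIco_le x N a' b') (Nat.cast_nonneg N)
  have : (0 : ℝ) ≤ countIco x N a' b' / N := by positivity
  rw [abs_le]
  constructor <;> linarith

theorem discSeq_nonneg : 0 ≤ discSeq x N :=
  (abs_nonneg _).trans
    (abs_countIco_div_sub_le_discSeq x N le_rfl (by norm_num : (0 : ℝ) < 1 / 2) (by norm_num))

theorem abs_countIco_sub_le {a b : ℝ} (ha : 0 ≤ a) (hab : a ≤ b) (hb : b < 1) :
    |(countIco x N a b : ℝ) - N * (b - a)| ≤ N * discSeq x N := by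
  rcases hab.eq_or_lt with rfl | hab
  · simpa [countIco_self] using mul_nonneg (Nat.cast_nonneg N) (discSeq_nonneg x N)
  rcases N.eq_zero_or_pos with rfl | hN
  · simp [countIco]
  have hN' : (0 : ℝ) < N := by exact_mod_cast hN
  calc |(countIco x N a b : ℝ) - N * (b - a)|
      = |N * ((countIco x N a b : ℝ) / N - (b - a))| := by
        congr 1
        field_simp
    _ = N * |(countIco x N a b : ℝ) / N - (b - a)| := by rw [abs_mul, abs_of_pos hN']
    _ ≤ N * discSeq x N := by
        gcongr
        exact abs_countIco_div_sub_le_discSeq x N ha hab hb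

theorem countIco_add_countIco_one (hx : ∀ n, x n ∈ Set.Ico 0 1) (a : ℝ) :
    countIco x N 0 a + countIco x N a 1 = N := by
  have hcompl (n : ℕ) : x n ∈ Set.Ico a 1 ↔ x n ∉ Set.Ico 0 a := by
    have := hx n
    simp only [Set.mem_Ico, not_and, not_lt] at this ⊢
    exact ⟨fun h _ => h.1, fun h => ⟨h this.1, this.2⟩⟩
  simpa [countIco, hcompl] using
    Finset.card_filter_add_card_filter_not (s := Finset.Icc 1 N) fun n => x n ∈ Set.Ico 0 a

theorem abs_countIco_sub_le_of_le_one (hx : ∀ n, x n ∈ Set.Ico 0 1) {a b : ℝ} (ha : 0 ≤ a)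
    (hab : a ≤ b) (hb : b ≤ 1) :
    |(countIco x N a b : ℝ) - N * (b - a)| ≤ N * discSeq x N := by
  rcases hb.lt_or_eq with hb | rfl
  · exact abs_countIco_sub_le x N ha hab hb
  -- `discSeq` only sees intervals with `b < 1`; `[a, 1)` is the complement of `[0, a)`.
  rcases hab.lt_or_eq with ha1 | rfl
  · have hsum : (countIco x N a 1 : ℝ) = N - countIco x N 0 a := by
      rw [eq_sub_iff_add_eq', ← Nat.cast_add, countIco_add_countIco_one x N hx a]
    calc |(countIco x N a 1 : ℝ) - N * (1 - a)| = |(countIco x N 0 a : ℝ) - N * (a - 0)| := by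
          rw [hsum, ← abs_neg]
          ring_nf
      _ ≤ N * discSeq x N := abs_countIco_sub_le x N le_rfl ha ha1
  · simpa [countIco_self] using mul_nonneg (Nat.cast_nonneg N) (discSeq_nonneg x N)

end Discrepancy

section Block

variable {k : ℕ} (B : Fin k → Fin 10)

/-- `B` read as a `k`-digit decimal integer; `Nat.ofDigits` takes the least significant digit
first, hence the `Fin.rev`. -/
def blockValue : ℕ := Nat.ofDigits 10 (List.ofFn fun s => (B (Fin.rev s) : ℕ))

def cylinder : Set ℝ := Set.Ico (blockValue B / 10 ^ k) ((blockValue B + 1) / 10 ^ k)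

theorem blockValue_lt : blockValue B < 10 ^ k := by
  unfold blockValue
  simpa using Nat.ofDigits_lt_base_pow_length (b := 10)
    (l := List.ofFn fun s => (B (Fin.rev s) : ℕ)) (by norm_num) (by simp)

theorem blockValue_div_pow_mod (j : Fin k) : blockValue B / 10 ^ (k - 1 - j) % 10 = B j := by
  rw [blockValue, Nat.ofDigits_div_pow_mod (by simp) (by simp; omega), List.getElem_ofFn]
  congr
  ext
  simp only [Fin.val_rev]
  omega

theorem forall_digit_eq_iff_floor_eq {x : ℝ} (hx0 : 0 ≤ x) (hx1 : x < 1) :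
    (∀ j : Fin k, digit x (j + 1) = B j) ↔ ⌊x * 10 ^ k⌋₊ = blockValue B := by
  have hlt : ⌊x * 10 ^ k⌋₊ < 10 ^ k := by
    rw [Nat.floor_lt (by positivity)]
    push_cast
    nlinarith [pow_pos (by norm_num : (0 : ℝ) < 10) k]
  have hdigit (j : Fin k) : digit x (j + 1) = ⌊x * 10 ^ k⌋₊ / 10 ^ (k - 1 - j) % 10 := by
    rw [digit_eq_floor_mod hx0, floor_mul_pow_eq_div j.isLt]
    congr 3
    omega
  rw [Nat.eq_iff_forall_div_pow_mod_eq hlt (blockValue_lt B)]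
  simp only [hdigit, ← blockValue_div_pow_mod B]
  constructor
  · intro h s hs
    simpa [show k - 1 - (k - 1 - s) = s by omega] using h ⟨k - 1 - s, by omega⟩
  · exact fun h j => h _ (by omega)

theorem fract_mem_cylinder_iff (α : ℝ) {i : ℕ} (hi : 1 ≤ i) :
    Int.fract (10 ^ (i - 1) * α) ∈ cylinder B ↔ ∀ j : Fin k, digit α (i + j) = B j := by
  have hdigit (j : Fin k) : digit α (i + j) = digit (Int.fract (10 ^ (i - 1) * α)) (j + 1) := by
    rw [digit_fract _ (by omega), digit_pow_mul]
    congr 1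
    omega
  simp only [hdigit, forall_digit_eq_iff_floor_eq B (Int.fract_nonneg _) (Int.fract_lt_one _)]
  exact (Nat.floor_mul_eq_iff_mem_Ico (Int.fract_nonneg _) (by positivity) _).symm

theorem occ_eq_countIco (hk : 1 ≤ k) (α : ℝ) (N : ℕ) :
    occ α B N = countIco (fun n => Int.fract (10 ^ (n - 1) * α)) (N + 1 - k)
      (blockValue B / 10 ^ k) ((blockValue B + 1) / 10 ^ k) := by
  unfold occ countIco
  congr 1
  ext i
  simp only [Finset.mem_filter, Finset.mem_Icc]
  constructor
  · rintro ⟨⟨hi, -⟩, hiN, hB⟩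
    exact ⟨⟨hi, by omega⟩, (fract_mem_cylinder_iff B α hi).mpr hB⟩
  · rintro ⟨⟨hi, hiN⟩, hB⟩
    exact ⟨⟨hi, by omega⟩, by omega, (fract_mem_cylinder_iff B α hi).mp hB⟩

end Block

theorem abs_occ_sub_le {k : ℕ} (hk : 1 ≤ k) (B : Fin k → Fin 10) (α : ℝ) (N : ℕ) :
    |(occ α B N : ℝ) - (N + 1 - k : ℕ) / 10 ^ k| ≤ (N + 1 - k : ℕ) * D α (N + 1 - k) := by
  have hv : (blockValue B : ℝ) + 1 ≤ 10 ^ k := by exact_mod_cast blockValue_lt B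
  have hcount := abs_countIco_sub_le_of_le_one (fun n => Int.fract (10 ^ (n - 1) * α))
    (N + 1 - k) (fun n => ⟨Int.fract_nonneg _, Int.fract_lt_one _⟩)
    (by positivity : (0 : ℝ) ≤ blockValue B / 10 ^ k) (by gcongr; linarith)
    ((div_le_one (by positivity)).2 hv)
  have hwidth : ((N + 1 - k : ℕ) : ℝ) / 10 ^ k
      = (N + 1 - k : ℕ) * ((blockValue B + 1) / 10 ^ k - blockValue B / 10 ^ k) := by
    ring
  rw [occ_eq_countIco B hk, hwidth]
  exact hcount

theorem abs_occ_sub_occ_le {k : ℕ} (hk : 1 ≤ k) (B₁ B₂ : Fin k → Fin 10) (α : ℝ) (N : ℕ) :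
    |(occ α B₁ N : ℝ) - occ α B₂ N| ≤ 2 * (N + 1 - k : ℕ) * D α (N + 1 - k) := by
  have h₁ := abs_occ_sub_le hk B₁ α N
  have h₂ := abs_occ_sub_le hk B₂ α N
  have := abs_sub_le (occ α B₁ N : ℝ) ((N + 1 - k : ℕ) / 10 ^ k) (occ α B₂ N)
  rw [abs_sub_comm ((N + 1 - k : ℕ) / 10 ^ k : ℝ)] at this
  linarith

theorem two_mul_log_le_three_mul_log {M N : ℕ} (hN : 8 ≤ N) (hNM : N ≤ 2 * M) :
    2 * Real.log N ≤ 3 * Real.log M := by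
  have hsq : N ^ 2 ≤ M ^ 3 := by
    have : 8 * N ^ 2 ≤ 8 * M ^ 3 := by
      calc 8 * N ^ 2 ≤ N ^ 3 := by nlinarith
        _ ≤ (2 * M) ^ 3 := Nat.pow_le_pow_left hNM 3
        _ = 8 * M ^ 3 := by ring
    omega
  have hlog : Real.log ((N ^ 2 : ℕ) : ℝ) ≤ Real.log ((M ^ 3 : ℕ) : ℝ) :=
    Real.log_le_log (by positivity) (by exact_mod_cast hsq)
  simpa [Real.log_pow] using hlog

theorem discrepancy_lower_of_occ_diff_general (α : ℝ)
    (k : ℕ) (hk : 1 ≤ k) (B₁ B₂ : Fin k → Fin 10) (C : ℝ) (hC : 0 < C)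
    (h : ∀ m : ℕ, ∃ N : ℕ, m ≤ N ∧
      |(occ α B₁ N : ℝ) - (occ α B₂ N : ℝ)| > C * N / Real.log N) :
    ∀ m : ℕ, ∃ N : ℕ, m ≤ N ∧ D α N > (C / 3) / Real.log N := by
  intro m
  obtain ⟨N, hN, hocc⟩ := h (m + 2 * k + 8)
  set M := N + 1 - k
  refine ⟨M, by omega, ?_⟩
  have hMN : (M : ℝ) ≤ N := by exact_mod_cast (show M ≤ N by omega)
  have hM : (0 : ℝ) < M := by exact_mod_cast (show 0 < M by omega)
  have hlogN : 0 < Real.log N := Real.log_pos (by exact_mod_cast (show 1 < N by omega))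
  have hlog : 2 * Real.log N ≤ 3 * Real.log M :=
    two_mul_log_le_three_mul_log (by omega) (by omega)
  have hD : 0 ≤ D α M := discSeq_nonneg _ M
  have hspread : C * N < 2 * M * D α M * Real.log N :=
    (div_lt_iff₀ hlogN).1 (hocc.trans_le (abs_occ_sub_occ_le hk B₁ B₂ α N))
  have hCN : C < 2 * D α M * Real.log N := by nlinarith
  rw [gt_iff_lt, div_lt_iff₀ (by linarith)]
  nlinarith [mul_le_mul_of_nonneg_left hlog hD]

/-- If two digit blocks `B₁, B₂` of equal length `k` satisfy
`|occ(α, B₁, N) − occ(α, B₂, N)| > C·N / log N` for infinitely many `N`, then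
`D(α, N) > (C/3) / log N` for infinitely many `N`. -/
theorem discrepancy_lower_of_occ_diff (α : ℝ) (hα : α ∈ Set.Ico (0 : ℝ) 1)
    (k : ℕ) (hk : 1 ≤ k) (B₁ B₂ : Fin k → Fin 10) (C : ℝ) (hC : 0 < C)
    (h : ∀ m : ℕ, ∃ N : ℕ, m ≤ N ∧
      |(occ α B₁ N : ℝ) - (occ α B₂ N : ℝ)| > C * N / Real.log N) :
    ∀ m : ℕ, ∃ N : ℕ, m ≤ N ∧ D α N > (C / 3) / Real.log N :=
  discrepancy_lower_of_occ_diff_general α k hk B₁ B₂ C hC h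
end

section
/- For every digit block B of length k ≥ 2 and every ℓ ≥ k, the number of occurrences of B in the string s_ℓ that straddle a boundary between two consecutive ℓ-digit terms satisfies occ_o(B, s_ℓ) ≤ (k−1)·10^{ℓ−k}. -/
open scoped Classical

/-!
Fix the split point `j` of a straddling occurrence at the boundary `y | y + 1` and put
`m = ℓ - (k - j)`. The block prescribes the last `j` digits of `y` and the top `k - j` digits
`(y + 1) / 10^m` of `y + 1`. Since `(y + 1) % 10^m` depends only on `y % 10^m`, which consists of
the prescribed last `j` digits and the `ℓ - k` digits just above them, `y` is determined by `j`
and these `ℓ - k` middle digits. Hence `(y, j) ↦ (j, y / 10^j % 10^(ℓ-k))` is injective on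
occurrences, with at most `(k - 1) · 10^(ℓ-k)` values.
-/

namespace Nat

lemma mod_pow_eq_of_digits_eq {b a c : ℕ} :
    ∀ {n : ℕ}, (∀ t < n, a / b ^ t % b = c / b ^ t % b) → a % b ^ n = c % b ^ n
  | 0, _ => by simp [Nat.mod_one]
  | n + 1, h => by
    rw [pow_succ, Nat.mod_mul, Nat.mod_mul,
      mod_pow_eq_of_digits_eq fun t ht => h t (by omega), h n (by omega)]

lemma div_pow_eq_of_digits_eq {b a c m n : ℕ} (ha : a < b ^ (m + n)) (hc : c < b ^ (m + n))
    (h : ∀ t < n, a / b ^ (m + t) % b = c / b ^ (m + t) % b) : a / b ^ m = c / b ^ m := by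
  have hlt : ∀ x < b ^ (m + n), x / b ^ m < b ^ n :=
    fun x hx => Nat.div_lt_of_lt_mul (by rwa [← pow_add])
  rw [← Nat.mod_eq_of_lt (hlt a ha), ← Nat.mod_eq_of_lt (hlt c hc)]
  exact mod_pow_eq_of_digits_eq fun t ht => by
    simpa only [Nat.div_div_eq_div_mul, ← pow_add] using h t ht

end Nat

section Straddle

variable {k ℓ j y z : ℕ} {B : Fin k → Fin 10}

lemma mod_pow_eq_of_endsWith_block (hjk : j ≤ k)
    (hy : ∀ i : Fin k, (i : ℕ) < j → y / 10 ^ (j - 1 - i) % 10 = B i)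
    (hz : ∀ i : Fin k, (i : ℕ) < j → z / 10 ^ (j - 1 - i) % 10 = B i) :
    y % 10 ^ j = z % 10 ^ j :=
  Nat.mod_pow_eq_of_digits_eq fun t ht => by
    have hi : j - 1 - (j - 1 - t) = t := by omega
    simpa only [hi] using (hy ⟨j - 1 - t, by omega⟩ (by simp; omega)).trans
      (hz ⟨j - 1 - t, by omega⟩ (by simp; omega)).symm

lemma div_pow_eq_of_startsWith_block (hℓ : k ≤ ℓ) (hjk : j ≤ k)
    (hyℓ : y < 10 ^ ℓ) (hzℓ : z < 10 ^ ℓ)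
    (hy : ∀ i : Fin k, j ≤ (i : ℕ) → y / 10 ^ (ℓ - 1 - (i - j)) % 10 = B i)
    (hz : ∀ i : Fin k, j ≤ (i : ℕ) → z / 10 ^ (ℓ - 1 - (i - j)) % 10 = B i) :
    y / 10 ^ (ℓ - (k - j)) = z / 10 ^ (ℓ - (k - j)) := by
  have hℓ' : ℓ - (k - j) + (k - j) = ℓ := by omega
  refine Nat.div_pow_eq_of_digits_eq (n := k - j) (by rwa [hℓ']) (by rwa [hℓ']) fun t ht => ?_
  have hi : ℓ - 1 - (k - 1 - t - j) = ℓ - (k - j) + t := by omega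
  simpa only [hi] using (hy ⟨k - 1 - t, by omega⟩ (by simp; omega)).trans
    (hz ⟨k - 1 - t, by omega⟩ (by simp; omega)).symm

lemma eq_of_straddle_block (hℓ : k ≤ ℓ) (hjk : j ≤ k)
    (hyℓ : y + 1 < 10 ^ ℓ) (hzℓ : z + 1 < 10 ^ ℓ)
    (hyEnd : ∀ i : Fin k, (i : ℕ) < j → y / 10 ^ (j - 1 - i) % 10 = B i)
    (hyStart : ∀ i : Fin k, j ≤ (i : ℕ) → (y + 1) / 10 ^ (ℓ - 1 - (i - j)) % 10 = B i)
    (hzEnd : ∀ i : Fin k, (i : ℕ) < j → z / 10 ^ (j - 1 - i) % 10 = B i)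
    (hzStart : ∀ i : Fin k, j ≤ (i : ℕ) → (z + 1) / 10 ^ (ℓ - 1 - (i - j)) % 10 = B i)
    (hmid : y / 10 ^ j % 10 ^ (ℓ - k) = z / 10 ^ j % 10 ^ (ℓ - k)) : y = z := by
  have hsplit : 10 ^ (ℓ - (k - j)) = 10 ^ j * 10 ^ (ℓ - k) := by
    rw [← pow_add]; congr 1; omega
  have hlow : y % 10 ^ (ℓ - (k - j)) = z % 10 ^ (ℓ - (k - j)) := by
    rw [hsplit, Nat.mod_mul, Nat.mod_mul, mod_pow_eq_of_endsWith_block hjk hyEnd hzEnd, hmid]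
  have hhigh := div_pow_eq_of_startsWith_block hℓ hjk hyℓ hzℓ hyStart hzStart
  exact Nat.succ_injective (Nat.ext_div_mod hhigh (Nat.add_mod_eq_add_mod_right 1 hlow))

end Straddle

theorem occOSeg_upper_general (k ℓ : ℕ) (B : Fin k → Fin 10) (hℓ : k ≤ ℓ) :
    occOSeg B ℓ ≤ (k - 1) * 10 ^ (ℓ - k) := by
  calc occOSeg B ℓ ≤ (Finset.Ico 1 k ×ˢ Finset.range (10 ^ (ℓ - k))).card := by
        refine Finset.card_le_card_of_injOn (fun p => (p.2, p.1 / 10 ^ p.2 % 10 ^ (ℓ - k)))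
          (fun p hp => ?_) ?_
        · simp only [Finset.mem_coe, Finset.mem_filter, Finset.mem_product, Finset.mem_Ico,
            Finset.mem_range] at hp ⊢
          exact ⟨hp.1.2, Nat.mod_lt _ (by positivity)⟩
        · rintro ⟨y, j⟩ hp ⟨z, j'⟩ hq heq
          simp only [Finset.coe_filter, Finset.mem_product, Finset.mem_Ico,
            Set.mem_ofPred_eq] at hp hq
          obtain ⟨rfl, hmid⟩ := Prod.mk.inj heq
          obtain ⟨⟨⟨-, hyℓ⟩, -, hjk⟩, hyEnd, hyStart⟩ := hp
          obtain ⟨⟨⟨-, hzℓ⟩, -, -⟩, hzEnd, hzStart⟩ := hq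
          rw [eq_of_straddle_block hℓ hjk.le (by omega) (by omega) hyEnd hyStart hzEnd hzStart
            hmid]
    _ = (k - 1) * 10 ^ (ℓ - k) := by simp

/-- For every digit block `B` of length `k ≥ 2` and every `ℓ ≥ k`, the number of
occurrences of `B` in `s_ℓ` straddling a boundary between two consecutive
`ℓ`-digit terms satisfies `occ_o(B, s_ℓ) ≤ (k−1)·10^{ℓ−k}`. -/
theorem occOSeg_upper (k ℓ : ℕ) (hk : 2 ≤ k) (B : Fin k → Fin 10) (hℓ : k ≤ ℓ) :
    occOSeg B ℓ ≤ (k - 1) * 10 ^ (ℓ - k) :=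
  occOSeg_upper_general k ℓ B hℓ
end

section
/- There exists a constant C > 0 and a threshold N₀ ∈ ℕ such that for all N ≥ N₀, 10^{n(N)} ≤ C·N/log N, where n(N) is the number of decimal digits of v(N). -/
open scoped Classical

lemma T_le_mul_length_digits (v : ℕ) : T v ≤ v * (Nat.digits 10 v).length := by
  calc T v ≤ ∑ _j ∈ Finset.Icc 1 v, (Nat.digits 10 v).length :=
        Finset.sum_le_sum fun j hj => Nat.le_length_digits_le 10 j v (Finset.mem_Icc.mp hj).2
    _ = v * (Nat.digits 10 v).length := by simp

lemma mul_length_digits_le_T {a : ℕ} (ha : 1 ≤ a) (b : ℕ) :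
    (b + 1 - a) * (Nat.digits 10 a).length ≤ T b := by
  calc (b + 1 - a) * (Nat.digits 10 a).length
      = ∑ _j ∈ Finset.Icc a b, (Nat.digits 10 a).length := by simp
    _ ≤ ∑ j ∈ Finset.Icc a b, (Nat.digits 10 j).length :=
        Finset.sum_le_sum fun j hj => Nat.le_length_digits_le 10 a j (Finset.mem_Icc.mp hj).1
    _ ≤ T b := Finset.sum_le_sum_of_subset (Finset.Icc_subset_Icc_left ha)

lemma length_digits_ten_pow (k : ℕ) : (Nat.digits 10 (10 ^ k)).length = k + 1 := by
  simpa using congrArg List.length (Nat.digits_base_pow_mul (b := 10) (k := k) (m := 1)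
    (by norm_num) one_pos)

section vOf

variable {N : ℕ}

lemma le_T_vOf (N : ℕ) : N ≤ T (vOf N) :=
  Nat.sInf_mem (s := {v | N ≤ T v}) ⟨N, le_T N⟩

lemma vOf_pos (hN : 0 < N) : 0 < vOf N := by
  by_contra! h
  simpa [Nat.le_zero.mp h, T] using (le_T_vOf N).trans_lt' hN

lemma T_vOf_sub_one_lt (hN : 0 < N) : T (vOf N - 1) < N :=
  not_le.mp <| Nat.notMem_of_lt_sInf (s := {v | N ≤ T v}) (Nat.sub_one_lt (vOf_pos hN).ne')

lemma vOf_lt_ten_pow_nOf (N : ℕ) : vOf N < 10 ^ nOf N :=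
  Nat.lt_base_pow_length_digits (by norm_num)

lemma nOf_eq_log_add_one (hN : 0 < N) : nOf N = Nat.log 10 (vOf N) + 1 :=
  Nat.length_digits 10 _ (by norm_num) (vOf_pos hN).ne'

lemma ten_pow_nOf_sub_one_le_vOf (hN : 0 < N) : 10 ^ (nOf N - 1) ≤ vOf N := by
  simpa [nOf_eq_log_add_one hN] using Nat.pow_log_le_self 10 (vOf_pos hN).ne'

lemma lt_nOf_mul_ten_pow_nOf (hN : 0 < N) : N < nOf N * 10 ^ nOf N := by
  have hn : 0 < nOf N := by simp [nOf_eq_log_add_one hN]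
  calc N ≤ T (vOf N) := le_T_vOf N
    _ ≤ vOf N * nOf N := T_le_mul_length_digits _
    _ < 10 ^ nOf N * nOf N := Nat.mul_lt_mul_of_pos_right (vOf_lt_ten_pow_nOf N) hn
    _ = nOf N * 10 ^ nOf N := mul_comm _ _

lemma two_le_nOf (hN : 10 ≤ N) : 2 ≤ nOf N := by
  by_contra! h
  have := lt_nOf_mul_ten_pow_nOf (N := N) (by omega)
  interval_cases nOf N <;> omega

lemma nOf_mul_ten_pow_nOf_le (hN : 10 ≤ N) : nOf N * 10 ^ nOf N ≤ 25 * N := by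
  obtain ⟨m, hm⟩ : ∃ m, nOf N = m + 2 := ⟨nOf N - 2, by have := two_le_nOf hN; omega⟩
  have hv := ten_pow_nOf_sub_one_le_vOf (N := N) (by omega)
  have hT := mul_length_digits_le_T (a := 10 ^ m) (Nat.one_le_pow _ _ (by norm_num)) (vOf N - 1)
  have hN' := T_vOf_sub_one_lt (N := N) (by omega)
  rw [length_digits_ten_pow] at hT
  rw [hm, show m + 2 - 1 = m + 1 by omega, pow_succ] at hv
  have h9 : 9 * 10 ^ m ≤ vOf N - 1 + 1 - 10 ^ m := by omega
  rw [hm, pow_add]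
  nlinarith

lemma log_le_two_mul_nOf_mul_log_ten (hN : 0 < N) :
    Real.log N ≤ 2 * nOf N * Real.log 10 := by
  have hN' : N ≤ 10 ^ (2 * nOf N) := by
    rw [two_mul, pow_add]
    exact (lt_nOf_mul_ten_pow_nOf hN).le.trans
      (Nat.mul_le_mul_right _ (Nat.lt_pow_self (by norm_num)).le)
  calc Real.log N ≤ Real.log ((10 : ℝ) ^ (2 * nOf N)) :=
        Real.log_le_log (by exact_mod_cast hN) (by exact_mod_cast hN')
    _ = 2 * nOf N * Real.log 10 := by rw [Real.log_pow]; push_cast; ring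

lemma ten_pow_nOf_mul_log_le (hN : 10 ≤ N) :
    10 ^ nOf N * Real.log N ≤ 50 * Real.log 10 * N := by
  have hlog := log_le_two_mul_nOf_mul_log_ten (N := N) (by omega)
  have hkey : (nOf N * 10 ^ nOf N : ℝ) ≤ 25 * N := by exact_mod_cast nOf_mul_ten_pow_nOf_le hN
  have hlog10 : 0 < Real.log 10 := Real.log_pos (by norm_num)
  calc 10 ^ nOf N * Real.log N ≤ 10 ^ nOf N * (2 * nOf N * Real.log 10) := by gcongr
    _ = 2 * Real.log 10 * (nOf N * 10 ^ nOf N) := by ring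
    _ ≤ 2 * Real.log 10 * (25 * N) := by gcongr
    _ = 50 * Real.log 10 * N := by ring

end vOf

/-- There exist `C > 0` and `N₀` such that for all `N ≥ N₀`,
`10^{n(N)} ≤ C·N / log N`, where `n(N)` is the number of decimal digits of `v(N)`. -/
theorem pow_nOf_le_div_log :
    ∃ C : ℝ, 0 < C ∧ ∃ N₀ : ℕ, ∀ N : ℕ, N₀ ≤ N →
      (10 : ℝ) ^ (nOf N) ≤ C * N / Real.log N := by
  refine ⟨50 * Real.log 10, by positivity, 10, fun N hN => ?_⟩
  have hlog : 0 < Real.log N := Real.log_pos (by exact_mod_cast (by omega : 1 < N))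
  rw [le_div_iff₀ hlog]
  exact ten_pow_nOf_mul_log_le hN
end
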